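/- arXiv:2212.04779 — 2 statements merged into one kernel-verified Lean document; each statement's English description precedes it below -/
import Mathlib

section
/- Let A and B be two finite-valued, strictly increasing Young functions with B ≪ A near infinity (i.e. lim_{t→∞} B(λt)/A(t) = 0 for every λ > 0). Then there exists a Young function C such that B ≪ C and C ≪ A near infinity; one such C is given by C⁻¹(t) = √(A⁻¹(t)·B⁻¹(t)), where A⁻¹ and B⁻¹ denote the right-continuous inverses. -/
open Set Filter

/-- `B` increases essentially more slowly than `A` near infinity:
`lim_{t→∞} B(λt)/A(t) = 0` for every `λ > 0`. -/
def GrowsEssentiallySlower (B A : ℝ → ℝ) : Prop :=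
  ∀ l : ℝ, 0 < l → Tendsto (fun t => B (l * t) / A t) atTop (nhds 0)

open Classical in
noncomputable def rinv (f : ℝ → ℝ) (s : ℝ) : ℝ :=
  if h : ∃ t, 0 ≤ t ∧ f t = s then h.choose else 0

lemma rinv_spec {f : ℝ → ℝ} {s : ℝ} (h : ∃ t, 0 ≤ t ∧ f t = s) :
    0 ≤ rinv f s ∧ f (rinv f s) = s := by
  rw [rinv, dif_pos h]
  exact h.choose_spec

lemma conv_scale {f : ℝ → ℝ} (hconv : ConvexOn ℝ (Ici 0) f) (h0 : f 0 = 0)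
    {c t : ℝ} (hc0 : 0 ≤ c) (hc1 : c ≤ 1) (ht : 0 ≤ t) : f (c * t) ≤ c * f t := by
  have h := hconv.2 (mem_Ici.2 ht) (mem_Ici.2 le_rfl) hc0 (by linarith : (0:ℝ) ≤ 1 - c)
    (by ring)
  simpa [h0, smul_eq_mul] using h

lemma conc_scale {f : ℝ → ℝ} (hconc : ConcaveOn ℝ (Ici 0) f) (h0 : f 0 = 0)
    {c t : ℝ} (hc0 : 0 ≤ c) (hc1 : c ≤ 1) (ht : 0 ≤ t) : c * f t ≤ f (c * t) := by
  have h := hconc.2 (mem_Ici.2 ht) (mem_Ici.2 le_rfl) hc0 (by linarith : (0:ℝ) ≤ 1 - c)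
    (by ring)
  simpa [h0, smul_eq_mul] using h

lemma sm_pos {f : ℝ → ℝ} (hmono : StrictMonoOn f (Ici 0)) (h0 : f 0 = 0)
    {t : ℝ} (ht : 0 < t) : 0 < f t := by
  have := hmono (mem_Ici.2 le_rfl) (mem_Ici.2 ht.le) ht
  simpa [h0] using this

lemma sm_nonneg {f : ℝ → ℝ} (hmono : StrictMonoOn f (Ici 0)) (h0 : f 0 = 0)
    {t : ℝ} (ht : 0 ≤ t) : 0 ≤ f t := by
  rcases eq_or_lt_of_le ht with h | h
  · simp [← h, h0]
  · exact (sm_pos hmono h0 h).le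

lemma conv_tendsto {f : ℝ → ℝ} (hconv : ConvexOn ℝ (Ici 0) f) (h0 : f 0 = 0)
    (hmono : StrictMonoOn f (Ici 0)) : Tendsto f atTop atTop := by
  have h1 : 0 < f 1 := sm_pos hmono h0 one_pos
  have key : ∀ᶠ t in atTop, t * f 1 ≤ f t := by
    filter_upwards [eventually_ge_atTop 1] with t ht
    have htpos : (0:ℝ) < t := lt_of_lt_of_le one_pos ht
    have h := conv_scale hconv h0 (le_of_lt (by positivity : (0:ℝ) < 1/t))
      (by rw [div_le_one htpos]; exact ht) htpos.le
    rw [one_div, inv_mul_cancel₀ htpos.ne'] at h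
    have := mul_le_mul_of_nonneg_left h htpos.le
    calc t * f 1 ≤ t * (t⁻¹ * f t) := this
    _ = f t := by field_simp
  exact tendsto_atTop_mono' atTop key (Tendsto.atTop_mul_const h1 tendsto_id)

lemma conv_contOn {f : ℝ → ℝ} (hconv : ConvexOn ℝ (Ici 0) f) (h0 : f 0 = 0)
    (hmono : StrictMonoOn f (Ici 0)) : ContinuousOn f (Ici 0) := by
  have hio : ContinuousOn f (Ioi 0) :=
    (hconv.subset Ioi_subset_Ici_self (convex_Ioi 0)).continuousOn isOpen_Ioi
  intro x hx
  rcases eq_or_lt_of_le (mem_Ici.1 hx) with h | h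
  · subst h
    rw [ContinuousWithinAt, h0]
    apply tendsto_of_tendsto_of_tendsto_of_le_of_le'
      (tendsto_const_nhds : Tendsto (fun _ : ℝ => (0:ℝ)) _ _)
      (show Tendsto (fun t : ℝ => t * f 1) (nhdsWithin 0 (Ici 0)) (nhds 0) by
        have : Tendsto (fun t : ℝ => t * f 1) (nhds 0) (nhds (0 * f 1)) :=
          (continuous_id.mul continuous_const).tendsto 0
        rw [zero_mul] at this
        exact this.mono_left nhdsWithin_le_nhds)
    · filter_upwards [self_mem_nhdsWithin] with t ht
      exact sm_nonneg hmono h0 (mem_Ici.1 ht)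
    · filter_upwards [self_mem_nhdsWithin,
        inter_mem_nhdsWithin (Ici 0) (Iio_mem_nhds one_pos)] with t ht ht2
      have := conv_scale hconv h0 (mem_Ici.1 ht) (le_of_lt ht2.2) zero_le_one
      simpa using this
  · exact ((hio.continuousAt (Ioi_mem_nhds h)).continuousWithinAt)

lemma conv_surj {f : ℝ → ℝ} (hcont : ContinuousOn f (Ici 0)) (h0 : f 0 = 0)
    (htop : Tendsto f atTop atTop) {s : ℝ} (hs : 0 ≤ s) : ∃ t, 0 ≤ t ∧ f t = s := by
  obtain ⟨T, hT0, hTs⟩ : ∃ T, 0 ≤ T ∧ s ≤ f T := by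
    obtain ⟨T, h1, h2⟩ := ((htop.eventually_ge_atTop s).and (eventually_ge_atTop 0)).exists
    exact ⟨T, h2, h1⟩
  have h := intermediate_value_Icc hT0 (hcont.mono (Icc_subset_Ici_self))
  have hmem : s ∈ Icc (f 0) (f T) := ⟨by rw [h0]; exact hs, hTs⟩
  obtain ⟨t, ht, hft⟩ := h hmem
  exact ⟨t, ht.1, hft⟩

section RInv

variable {f : ℝ → ℝ} (hmono : StrictMonoOn f (Ici 0))
  (hsurj : ∀ s, 0 ≤ s → ∃ t, 0 ≤ t ∧ f t = s)

include hmono in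
lemma rinv_f {t : ℝ} (ht : 0 ≤ t) : rinv f (f t) = t := by
  have h : ∃ u, 0 ≤ u ∧ f u = f t := ⟨t, ht, rfl⟩
  obtain ⟨h1, h2⟩ := rinv_spec h
  exact hmono.injOn (mem_Ici.2 h1) (mem_Ici.2 ht) h2

include hmono hsurj in
lemma rinv_mono {s₁ s₂ : ℝ} (h1 : 0 ≤ s₁) (h2 : s₁ ≤ s₂) : rinv f s₁ ≤ rinv f s₂ := by
  by_contra hc
  push_neg at hc
  have := hmono (mem_Ici.2 (rinv_spec (hsurj s₂ (h1.trans h2))).1)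
    (mem_Ici.2 (rinv_spec (hsurj s₁ h1)).1) hc
  rw [(rinv_spec (hsurj s₂ (h1.trans h2))).2, (rinv_spec (hsurj s₁ h1)).2] at this
  linarith

include hmono hsurj in
lemma rinv_le {s x : ℝ} (hs : 0 ≤ s) (hx : 0 ≤ x) (h : s ≤ f x) : rinv f s ≤ x := by
  have := rinv_mono hmono hsurj hs h
  rwa [rinv_f hmono hx] at this

include hmono hsurj in
lemma le_rinv {s x : ℝ} (hs : 0 ≤ s) (hx : 0 ≤ x) (h : f x ≤ s) : x ≤ rinv f s := by
  obtain ⟨h1, h2⟩ := rinv_spec (hsurj s hs)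
  by_contra hc
  push_neg at hc
  have := hmono (mem_Ici.2 h1) (mem_Ici.2 hx) hc
  rw [h2] at this
  linarith

include hmono hsurj in
lemma rinv_tendsto : Tendsto (rinv f) atTop atTop := by
  rw [tendsto_atTop]
  intro M
  filter_upwards [eventually_ge_atTop (f (max M 0)), eventually_ge_atTop (0:ℝ)] with s h1 h2
  have : max M 0 ≤ rinv f s := le_rinv hmono hsurj h2 (le_max_right M 0) h1
  exact le_trans (le_max_left M 0) this

include hmono hsurj in
lemma rinv_concave (hconv : ConvexOn ℝ (Ici 0) f) :
    ConcaveOn ℝ (Ici 0) (rinv f) := by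
  refine ⟨convex_Ici 0, ?_⟩
  intro x hx y hy a b ha hb hab
  simp only [smul_eq_mul]
  obtain ⟨htx0, htx⟩ := rinv_spec (hsurj x (mem_Ici.1 hx))
  obtain ⟨hty0, hty⟩ := rinv_spec (hsurj y (mem_Ici.1 hy))
  have key : f (a * rinv f x + b * rinv f y) ≤ a * x + b * y := by
    have h := hconv.2 (mem_Ici.2 htx0) (mem_Ici.2 hty0) ha hb hab
    simp only [smul_eq_mul, htx, hty] at h
    exact h
  have hxy : 0 ≤ a * x + b * y := by
    have := mem_Ici.1 hx; have := mem_Ici.1 hy; positivity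
  exact le_rinv hmono hsurj hxy (by positivity) key

include hmono hsurj in
lemma rinv_convex (hconc : ConcaveOn ℝ (Ici 0) f) :
    ConvexOn ℝ (Ici 0) (rinv f) := by
  refine ⟨convex_Ici 0, ?_⟩
  intro x hx y hy a b ha hb hab
  simp only [smul_eq_mul]
  obtain ⟨htx0, htx⟩ := rinv_spec (hsurj x (mem_Ici.1 hx))
  obtain ⟨hty0, hty⟩ := rinv_spec (hsurj y (mem_Ici.1 hy))
  have key : a * x + b * y ≤ f (a * rinv f x + b * rinv f y) := by
    have h := hconc.2 (mem_Ici.2 htx0) (mem_Ici.2 hty0) ha hb hab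
    simp only [smul_eq_mul, htx, hty] at h
    exact h
  have hxy : 0 ≤ a * x + b * y := by
    have := mem_Ici.1 hx; have := mem_Ici.1 hy; positivity
  exact rinv_le hmono hsurj hxy (by positivity) key

include hmono hsurj in
lemma rinv_smono : StrictMonoOn (rinv f) (Ici 0) := by
  intro s₁ h1 s₂ h2 h
  by_contra hc
  push_neg at hc
  have := hmono.monotoneOn (mem_Ici.2 (rinv_spec (hsurj s₂ (mem_Ici.1 h2))).1)
    (mem_Ici.2 (rinv_spec (hsurj s₁ (mem_Ici.1 h1))).1) hc
  rw [(rinv_spec (hsurj s₂ (mem_Ici.1 h2))).2, (rinv_spec (hsurj s₁ (mem_Ici.1 h1))).2] at this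
  linarith

end RInv

lemma sqrt_tendsto_atTop : Tendsto Real.sqrt atTop atTop := by
  rw [tendsto_atTop]
  intro M
  filter_upwards [eventually_ge_atTop ((max M 0)^2)] with x hx
  calc M ≤ max M 0 := le_max_left _ _
  _ = Real.sqrt ((max M 0)^2) := (Real.sqrt_sq (le_max_right _ _)).symm
  _ ≤ Real.sqrt x := Real.sqrt_le_sqrt hx

lemma sqrt_mul_concave {p q : ℝ → ℝ} (hp : ConcaveOn ℝ (Ici 0) p) (hq : ConcaveOn ℝ (Ici 0) q)
    (hp0 : ∀ s, 0 ≤ s → 0 ≤ p s) (hq0 : ∀ s, 0 ≤ s → 0 ≤ q s) :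
    ConcaveOn ℝ (Ici 0) (fun s => Real.sqrt (p s * q s)) := by
  refine ⟨convex_Ici 0, ?_⟩
  intro x hx y hy a b ha hb hab
  simp only [smul_eq_mul]
  replace hx := mem_Ici.1 hx
  replace hy := mem_Ici.1 hy
  have hpx := hp0 x hx
  have hpy := hp0 y hy
  have hqx := hq0 x hx
  have hqy := hq0 y hy
  set u := Real.sqrt (p x * q x) with hu_def
  set v := Real.sqrt (p y * q y) with hv_def
  have hu0 : 0 ≤ u := Real.sqrt_nonneg _
  have hv0 : 0 ≤ v := Real.sqrt_nonneg _
  have hu : u ^ 2 = p x * q x := Real.sq_sqrt (by positivity)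
  have hv : v ^ 2 = p y * q y := Real.sq_sqrt (by positivity)
  have hpz : a * p x + b * p y ≤ p (a * x + b * y) := by
    simpa [smul_eq_mul] using hp.2 (mem_Ici.2 hx) (mem_Ici.2 hy) ha hb hab
  have hqz : a * q x + b * q y ≤ q (a * x + b * y) := by
    simpa [smul_eq_mul] using hq.2 (mem_Ici.2 hx) (mem_Ici.2 hy) ha hb hab
  -- 2uv ≤ p x * q y + p y * q x
  set w₁ := Real.sqrt (p x * q y) with hw1_def
  set w₂ := Real.sqrt (p y * q x) with hw2_def
  have hw1 : w₁ ^ 2 = p x * q y := Real.sq_sqrt (by positivity)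
  have hw2 : w₂ ^ 2 = p y * q x := Real.sq_sqrt (by positivity)
  have huv : u * v = w₁ * w₂ := by
    rw [hu_def, hv_def, hw1_def, hw2_def, ← Real.sqrt_mul (by positivity),
      ← Real.sqrt_mul (by positivity)]
    ring_nf
  have h2uv : 2 * (u * v) ≤ p x * q y + p y * q x := by
    rw [huv]
    nlinarith [sq_nonneg (w₁ - w₂)]
  have key : (a * u + b * v) ^ 2 ≤ p (a * x + b * y) * q (a * x + b * y) := by
    have step1 : (a * u + b * v) ^ 2 ≤ (a * p x + b * p y) * (a * q x + b * q y) := by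
      calc (a * u + b * v) ^ 2
          = a^2 * (u^2) + 2 * (a*b) * (u*v) + b^2 * (v^2) := by ring
        _ = a^2 * (p x * q x) + 2 * (a*b) * (u*v) + b^2 * (p y * q y) := by rw [hu, hv]
        _ ≤ a^2 * (p x * q x) + (a*b) * (p x * q y + p y * q x) + b^2 * (p y * q y) := by
            nlinarith [mul_nonneg ha hb, h2uv]
        _ = (a * p x + b * p y) * (a * q x + b * q y) := by ring
    have hq2 : 0 ≤ a * q x + b * q y := by positivity
    have hp2 : 0 ≤ a * p x + b * p y := by positivity
    calc (a * u + b * v) ^ 2 ≤ (a * p x + b * p y) * (a * q x + b * q y) := step1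
    _ ≤ p (a * x + b * y) * q (a * x + b * y) :=
      mul_le_mul hpz hqz hq2 (le_trans hp2 hpz)
  exact (Real.le_sqrt (by positivity) (le_trans (sq_nonneg (a*u+b*v)) key)).2 key

theorem exists_intermediate_young_function
    (A B : ℝ → ℝ)
    (hA_conv : ConvexOn ℝ (Ici 0) A) (hA0 : A 0 = 0)
    (hA_mono : StrictMonoOn A (Ici 0))
    (hB_conv : ConvexOn ℝ (Ici 0) B) (hB0 : B 0 = 0)
    (hB_mono : StrictMonoOn B (Ici 0))
    (hBA : GrowsEssentiallySlower B A) :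
    ∃ C : ℝ → ℝ, ConvexOn ℝ (Ici 0) C ∧ C 0 = 0 ∧ StrictMonoOn C (Ici 0) ∧
      GrowsEssentiallySlower B C ∧ GrowsEssentiallySlower C A := by
  have hAcont := conv_contOn hA_conv hA0 hA_mono
  have hAtop := conv_tendsto hA_conv hA0 hA_mono
  have hAsurj : ∀ s, 0 ≤ s → ∃ t, 0 ≤ t ∧ A t = s := fun s hs => conv_surj hAcont hA0 hAtop hs
  have hBcont := conv_contOn hB_conv hB0 hB_mono
  have hBtop := conv_tendsto hB_conv hB0 hB_mono
  have hBsurj : ∀ s, 0 ≤ s → ∃ t, 0 ≤ t ∧ B t = s := fun s hs => conv_surj hBcont hB0 hBtop hs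
  have hiAconc := rinv_concave hA_mono hAsurj hA_conv
  have hiBconc := rinv_concave hB_mono hBsurj hB_conv
  have hiA0 : rinv A 0 = 0 := by
    have := rinv_f hA_mono (le_refl (0:ℝ)); rwa [hA0] at this
  have hiB0 : rinv B 0 = 0 := by
    have := rinv_f hB_mono (le_refl (0:ℝ)); rwa [hB0] at this
  have hiAnn : ∀ s, 0 ≤ s → 0 ≤ rinv A s := fun s hs => (rinv_spec (hAsurj s hs)).1
  have hiBnn : ∀ s, 0 ≤ s → 0 ≤ rinv B s := fun s hs => (rinv_spec (hBsurj s hs)).1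
  set ψ : ℝ → ℝ := fun s => Real.sqrt (rinv A s * rinv B s) with hψdef
  have hψ0 : ψ 0 = 0 := by simp [hψdef, hiA0]
  have hψ_conc : ConcaveOn ℝ (Ici 0) ψ := sqrt_mul_concave hiAconc hiBconc hiAnn hiBnn
  have hψ_smono : StrictMonoOn ψ (Ici 0) := by
    intro s₁ h1 s₂ h2 h
    have hA12 : rinv A s₁ < rinv A s₂ := rinv_smono hA_mono hAsurj h1 h2 h
    have hB12 : rinv B s₁ < rinv B s₂ := rinv_smono hB_mono hBsurj h1 h2 h
    apply Real.sqrt_lt_sqrt (mul_nonneg (hiAnn _ (mem_Ici.1 h1)) (hiBnn _ (mem_Ici.1 h1)))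
    exact mul_lt_mul'' hA12 hB12 (hiAnn _ (mem_Ici.1 h1)) (hiBnn _ (mem_Ici.1 h1))
  have hψ_top : Tendsto ψ atTop atTop :=
    sqrt_tendsto_atTop.comp
      ((rinv_tendsto hA_mono hAsurj).atTop_mul_atTop₀ (rinv_tendsto hB_mono hBsurj))
  have hψ_cont : ContinuousOn ψ (Ici 0) := by
    intro x hx
    rcases eq_or_lt_of_le (mem_Ici.1 hx) with h | h
    · rw [← h, ContinuousWithinAt, hψ0]
      rw [tendsto_order]
      constructor
      · intro b hb
        filter_upwards [self_mem_nhdsWithin] with s hs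
        exact lt_of_lt_of_le hb (Real.sqrt_nonneg _)
      · intro b hb
        have hb2 : 0 < b/2 := by linarith
        have hAb : 0 < A (b/2) := sm_pos hA_mono hA0 hb2
        have hBb : 0 < B (b/2) := sm_pos hB_mono hB0 hb2
        filter_upwards [self_mem_nhdsWithin,
          inter_mem_nhdsWithin (Ici 0) (Iio_mem_nhds (lt_min hAb hBb))] with s hs hs2
        have hs0 : (0:ℝ) ≤ s := mem_Ici.1 hs
        have h1 : rinv A s ≤ b/2 := rinv_le hA_mono hAsurj hs0 hb2.le
          (le_of_lt (lt_of_lt_of_le hs2.2 (min_le_left _ _)))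
        have h2 : rinv B s ≤ b/2 := rinv_le hB_mono hBsurj hs0 hb2.le
          (le_of_lt (lt_of_lt_of_le hs2.2 (min_le_right _ _)))
        have hle : ψ s ≤ b/2 := by
          rw [hψdef]
          calc Real.sqrt (rinv A s * rinv B s) ≤ Real.sqrt ((b/2)*(b/2)) :=
            Real.sqrt_le_sqrt (mul_le_mul h1 h2 (hiBnn s hs0) hb2.le)
          _ = b/2 := Real.sqrt_mul_self hb2.le
        linarith
    · have cA : ContinuousOn (rinv A) (Ioi 0) := by
        have hcc := ((hiAconc.subset Ioi_subset_Ici_self (convex_Ioi 0)).neg.continuousOn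
          isOpen_Ioi).neg
        simpa using hcc
      have cB : ContinuousOn (rinv B) (Ioi 0) := by
        have hcc := ((hiBconc.subset Ioi_subset_Ici_self (convex_Ioi 0)).neg.continuousOn
          isOpen_Ioi).neg
        simpa using hcc
      have hcx : ContinuousAt ψ x := by
        have hA' : ContinuousAt (rinv A) x := cA.continuousAt (Ioi_mem_nhds h)
        have hB' : ContinuousAt (rinv B) x := cB.continuousAt (Ioi_mem_nhds h)
        exact (Real.continuous_sqrt.continuousAt).comp (hA'.mul hB')
      exact hcx.continuousWithinAt
  have hψsurj : ∀ s, 0 ≤ s → ∃ t, 0 ≤ t ∧ ψ t = s := fun s hs => conv_surj hψ_cont hψ0 hψ_top hs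
  have hL1 : ∀ δ : ℝ, 0 < δ → ∀ᶠ s in atTop, rinv A s ≤ δ * rinv B s := by
    intro δ hδ
    have h := hBA δ⁻¹ (by positivity)
    have hev : ∀ᶠ u in atTop, B (δ⁻¹ * u) ≤ A u := by
      filter_upwards [h.eventually_lt_const one_pos, eventually_gt_atTop 0] with u h1 h2
      have hAu : 0 < A u := sm_pos hA_mono hA0 h2
      rw [div_lt_one hAu] at h1
      exact h1.le
    have hcomp := ((rinv_tendsto hB_mono hBsurj).const_mul_atTop hδ).eventually hev
    filter_upwards [hcomp, eventually_ge_atTop 0] with s h1 h2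
    have hiBs := hiBnn s h2
    have heq : δ⁻¹ * (δ * rinv B s) = rinv B s := by field_simp
    rw [heq, (rinv_spec (hBsurj s h2)).2] at h1
    exact rinv_le hA_mono hAsurj h2 (by positivity) h1
  refine ⟨rinv ψ, rinv_convex hψ_smono hψsurj hψ_conc, ?_, rinv_smono hψ_smono hψsurj, ?_, ?_⟩
  · have := rinv_f hψ_smono (le_refl (0:ℝ)); rwa [hψ0] at this
  · -- B grows essentially slower than C
    intro l hl
    rw [NormedAddCommGroup.tendsto_nhds_zero]
    intro ε hε
    set δ : ℝ := min ((ε/(2*l))^2) ((1/l)^2) with hδdef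
    have hδpos : 0 < δ := lt_min (by positivity) (by positivity)
    have hsd1 : Real.sqrt δ ≤ ε/(2*l) := by
      calc Real.sqrt δ ≤ Real.sqrt ((ε/(2*l))^2) := Real.sqrt_le_sqrt (min_le_left _ _)
      _ = ε/(2*l) := Real.sqrt_sq (by positivity)
    have hsd2 : Real.sqrt δ ≤ 1/l := by
      calc Real.sqrt δ ≤ Real.sqrt ((1/l)^2) := Real.sqrt_le_sqrt (min_le_right _ _)
      _ = 1/l := Real.sqrt_sq (by positivity)
    set c : ℝ := l * Real.sqrt δ with hcdef
    have hc0 : 0 ≤ c := by positivity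
    have hc1 : c ≤ 1 := by
      rw [hcdef]
      calc l * Real.sqrt δ ≤ l * (1/l) := mul_le_mul_of_nonneg_left hsd2 hl.le
      _ = 1 := by field_simp
    have hcε : c ≤ ε/2 := by
      rw [hcdef]
      calc l * Real.sqrt δ ≤ l * (ε/(2*l)) := mul_le_mul_of_nonneg_left hsd1 hl.le
      _ = ε/2 := by field_simp
    filter_upwards [eventually_ge_atTop (0:ℝ), eventually_gt_atTop (0:ℝ),
      (rinv_tendsto hψ_smono hψsurj).eventually (hL1 δ hδpos),
      (rinv_tendsto hψ_smono hψsurj).eventually_ge_atTop 1] with t ht0 htpos hδt hCt1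
    set s := rinv ψ t with hsdef
    have hs0 : (0:ℝ) ≤ s := (rinv_spec (hψsurj t ht0)).1
    have hspos : 0 < s := lt_of_lt_of_le one_pos hCt1
    have hψs : ψ s = t := (rinv_spec (hψsurj t ht0)).2
    have hiBs := hiBnn s hs0
    have ht_le : t ≤ Real.sqrt δ * rinv B s := by
      rw [← hψs, hψdef]
      calc Real.sqrt (rinv A s * rinv B s) ≤ Real.sqrt (δ * rinv B s * rinv B s) := by
            apply Real.sqrt_le_sqrt
            exact mul_le_mul_of_nonneg_right hδt hiBs
      _ = Real.sqrt δ * rinv B s := by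
            rw [mul_assoc, Real.sqrt_mul hδpos.le, Real.sqrt_mul_self hiBs]
    have hlt : l * t ≤ c * rinv B s := by
      rw [hcdef, mul_assoc]
      exact mul_le_mul_of_nonneg_left ht_le hl.le
    have hBlt : B (l * t) ≤ (ε/2) * s := by
      have h1 : B (l*t) ≤ B (c * rinv B s) :=
        hB_mono.monotoneOn (mem_Ici.2 (by positivity)) (mem_Ici.2 (by positivity)) hlt
      have h2 : B (c * rinv B s) ≤ c * B (rinv B s) := conv_scale hB_conv hB0 hc0 hc1 hiBs
      rw [(rinv_spec (hBsurj s hs0)).2] at h2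
      calc B (l*t) ≤ c * s := le_trans h1 h2
      _ ≤ (ε/2) * s := mul_le_mul_of_nonneg_right hcε hs0
    have hBnn : 0 ≤ B (l*t) := sm_nonneg hB_mono hB0 (by positivity)
    rw [Real.norm_eq_abs, abs_of_nonneg (div_nonneg hBnn hs0), div_lt_iff₀ hspos]
    calc B (l*t) ≤ (ε/2) * s := hBlt
    _ < ε * s := by nlinarith
  · -- C grows essentially slower than A
    intro l hl
    rw [NormedAddCommGroup.tendsto_nhds_zero]
    intro ε hε
    set ε' : ℝ := min (ε/2) 1 with hε'def
    have hε'pos : 0 < ε' := lt_min (by linarith) one_pos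
    have hε'1 : ε' ≤ 1 := min_le_right _ _
    have hε'ε : ε' < ε := lt_of_le_of_lt (min_le_left _ _) (by linarith)
    set m : ℝ := (l/ε')^2 with hmdef
    have hmpos : 0 < m := by positivity
    have h := hBA m hmpos
    filter_upwards [h.eventually_lt_const one_pos, eventually_gt_atTop (0:ℝ)] with t hr htpos
    have ht0 : (0:ℝ) ≤ t := htpos.le
    have hAt : 0 < A t := sm_pos hA_mono hA0 htpos
    rw [div_lt_one hAt] at hr
    have hiBAt : m * t ≤ rinv B (A t) := le_rinv hB_mono hBsurj hAt.le (by positivity) hr.le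
    have hψAt : (l/ε') * t ≤ ψ (A t) := by
      rw [hψdef]
      have hiAAt : rinv A (A t) = t := rinv_f hA_mono ht0
      have h1 : m * t^2 ≤ rinv A (A t) * rinv B (A t) := by
        rw [hiAAt]
        calc m * t^2 = t * (m*t) := by ring
        _ ≤ t * rinv B (A t) := mul_le_mul_of_nonneg_left hiBAt ht0
      calc (l/ε') * t = Real.sqrt (m * t^2) := by
            rw [Real.sqrt_mul hmpos.le, hmdef, Real.sqrt_sq (by positivity), Real.sqrt_sq ht0]
      _ ≤ Real.sqrt (rinv A (A t) * rinv B (A t)) := Real.sqrt_le_sqrt h1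
    have hψε : l * t ≤ ψ (ε' * A t) := by
      have h2 : ε' * ψ (A t) ≤ ψ (ε' * A t) := conc_scale hψ_conc hψ0 hε'pos.le hε'1 hAt.le
      calc l * t = ε' * ((l/ε') * t) := by field_simp
      _ ≤ ε' * ψ (A t) := mul_le_mul_of_nonneg_left hψAt hε'pos.le
      _ ≤ ψ (ε' * A t) := h2
    have hC : rinv ψ (l*t) ≤ ε' * A t := by
      have hm := rinv_mono hψ_smono hψsurj (by positivity : (0:ℝ) ≤ l*t) hψε
      rwa [rinv_f hψ_smono (by positivity : (0:ℝ) ≤ ε' * A t)] at hm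
    have hCnn : 0 ≤ rinv ψ (l*t) := (rinv_spec (hψsurj _ (by positivity))).1
    rw [Real.norm_eq_abs, abs_of_nonneg (div_nonneg hCnn hAt.le), div_lt_iff₀ hAt]
    calc rinv ψ (l*t) ≤ ε' * A t := hC
    _ < ε * A t := by nlinarith
end

section
/- Let p > 1, q ∈ ℝ with μ := min{1, p+q−1, p−1} > 0. Then for all η, ξ ∈ ℝⁿ with η ≠ 0, ((p−2)·log(1+|η|) + q·|η|/(1+|η|))·⟨ξ, η⟩² + |η|²·log(1+|η|)·|ξ|² ≥ μ·|η|²·|ξ|²·log(1+|η|). -/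
open Real

theorem ellipticity_power_log
    (n : ℕ) (p q : ℝ) (hp : 1 < p) (hpq : 0 < p + q - 1) :
    ∀ η ξ : EuclideanSpace ℝ (Fin n), η ≠ 0 →
      min 1 (min (p + q - 1) (p - 1)) * ‖η‖ ^ 2 * ‖ξ‖ ^ 2 * Real.log (1 + ‖η‖) ≤
        ((p - 2) * Real.log (1 + ‖η‖) + q * ‖η‖ / (1 + ‖η‖)) * (inner ℝ ξ η : ℝ) ^ 2
          + ‖η‖ ^ 2 * Real.log (1 + ‖η‖) * ‖ξ‖ ^ 2 := by
  intro η ξ hη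
  have ht : 0 < ‖η‖ := norm_pos_iff.mpr hη
  have hL : 0 < Real.log (1 + ‖η‖) := Real.log_pos (by linarith)
  have hs : (inner ℝ ξ η : ℝ) ^ 2 ≤ ‖η‖ ^ 2 * ‖ξ‖ ^ 2 := by
    have h1 := abs_real_inner_le_norm ξ η
    nlinarith [sq_abs (inner ℝ ξ η : ℝ), abs_nonneg (inner ℝ ξ η : ℝ),
      norm_nonneg ξ, norm_nonneg η]
  have hfrac : ‖η‖ / (1 + ‖η‖) ≤ Real.log (1 + ‖η‖) := by
    have h := Real.log_le_sub_one_of_pos (show (0:ℝ) < (1 + ‖η‖)⁻¹ by positivity)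
    rw [Real.log_inv] at h
    have heq : (1 + ‖η‖)⁻¹ = 1 - ‖η‖ / (1 + ‖η‖) := by field_simp; ring
    rw [heq] at h; linarith
  have hμ1 : min 1 (min (p + q - 1) (p - 1)) ≤ 1 := min_le_left _ _
  have hμ2 : min 1 (min (p + q - 1) (p - 1)) ≤ p + q - 1 :=
    le_trans (min_le_right _ _) (min_le_left _ _)
  have hμ3 : min 1 (min (p + q - 1) (p - 1)) ≤ p - 1 :=
    le_trans (min_le_right _ _) (min_le_right _ _)
  set A := (p - 2) * Real.log (1 + ‖η‖) + q * ‖η‖ / (1 + ‖η‖) with hA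
  rcases le_or_gt 0 A with h | h
  · nlinarith [mul_nonneg h (sq_nonneg (inner ℝ ξ η : ℝ)),
      mul_nonneg (mul_nonneg (mul_nonneg (sub_nonneg.mpr hμ1) (sq_nonneg ‖η‖))
        (sq_nonneg ‖ξ‖)) hL.le]
  · have key : min 1 (min (p + q - 1) (p - 1)) * Real.log (1 + ‖η‖) ≤
        A + Real.log (1 + ‖η‖) := by
      rw [hA]
      rcases le_or_gt 0 q with hq | hq
      · have h0 : 0 ≤ q * ‖η‖ / (1 + ‖η‖) := by positivity
        nlinarith [mul_le_mul_of_nonneg_right hμ3 hL.le]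
      · have h1 : q * Real.log (1 + ‖η‖) ≤ q * (‖η‖ / (1 + ‖η‖)) :=
          mul_le_mul_of_nonpos_left hfrac hq.le
        have h2 : q * (‖η‖ / (1 + ‖η‖)) = q * ‖η‖ / (1 + ‖η‖) := by ring
        nlinarith [mul_le_mul_of_nonneg_right hμ2 hL.le]
    have hmono : A * (‖η‖ ^ 2 * ‖ξ‖ ^ 2) ≤ A * (inner ℝ ξ η : ℝ) ^ 2 :=
      mul_le_mul_of_nonpos_left hs h.le
    nlinarith [mul_le_mul_of_nonneg_right key
      (mul_nonneg (sq_nonneg ‖η‖) (sq_nonneg ‖ξ‖)), hmono]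
end
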